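/- For every q ∈ (0,1), the C*-algebras D₂⁴(q) and D₂⁴(0) coincide as subsets of B(H₂); that is, the unital C*-subalgebra of B(ℓ²(ℤ×ℕ)) generated by the two deformed operators X₀(q), X₁(q) equals the one generated by the undeformed operators X₀(0), X₁(0). -/

import Mathlib

noncomputable section
open scoped ENNReal

/-- The Hilbert space `H₂ = ℓ²(ℤ × ℕ)`. -/
abbrev H2 : Type := lp (fun _ : ℤ × ℕ => ℂ) 2

/-- The canonical orthonormal basis vectors `e_{m,i}` of `H₂`. -/
noncomputable def e (x : ℤ × ℕ) : H2 := lp.single 2 x 1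

local notation "⟪" x ", " y "⟫" => @inner ℂ H2 _ x y

lemma inner_e_left (z : ℤ × ℕ) (u : H2) : ⟪e z, u⟫ = u z := by
  rw [e, lp.inner_single_left, RCLike.inner_apply]
  simp

lemma vec_ext {u v : H2} (h : ∀ z, ⟪e z, u⟫ = ⟪e z, v⟫) : u = v := by
  apply lp.ext; funext z
  have := h z
  rwa [inner_e_left, inner_e_left] at this

lemma inner_e_e (x y : ℤ × ℕ) : ⟪e x, e y⟫ = if x = y then 1 else 0 := by
  rw [inner_e_left, e]
  rw [lp.single_apply]
  simp [eq_comm, Pi.single_apply]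

lemma orthonormal_e : Orthonormal ℂ e := by
  rw [orthonormal_iff_ite]
  intro i j
  simpa using inner_e_e i j

lemma single_eq_smul (x : ℤ × ℕ) (c : ℂ) : lp.single 2 x c = c • e x := by
  rw [e, ← lp.single_smul]
  simp

lemma op_ext {A B : H2 →L[ℂ] H2} (h : ∀ x, A (e x) = B (e x)) : A = B := by
  refine ContinuousLinearMap.ext fun v => ?_
  have hv := lp.hasSum_single (E := fun _ : ℤ × ℕ => ℂ) (p := 2) ENNReal.ofNat_ne_top v
  have hA := hv.mapL A
  have hB := hv.mapL B
  have heq : (fun x => A (lp.single 2 x (v x))) = fun x => B (lp.single 2 x (v x)) := by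
    funext x
    rw [single_eq_smul, map_smul, map_smul, h]
  exact hA.unique (heq ▸ hB)

lemma opNorm_le_of_shift {T : H2 →L[ℂ] H2} {c : ℤ × ℕ → ℂ} {f : ℤ × ℕ → ℤ × ℕ}
    (hf : Function.Injective f) (h : ∀ x, T (e x) = c x • e (f x))
    {C : ℝ} (hC : 0 ≤ C) (hc : ∀ x, ‖c x‖ ≤ C) : ‖T‖ ≤ C := by
  refine T.opNorm_le_bound hC fun v => ?_
  have hv := lp.hasSum_single (E := fun _ : ℤ × ℕ => ℂ) (p := 2) ENNReal.ofNat_ne_top v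
  have hTv : HasSum (fun x => (v x * c x) • e (f x)) (T v) := by
    have h2 := hv.mapL T
    have heq : (fun x => T (lp.single 2 x (v x))) = fun x => (v x * c x) • e (f x) := by
      funext x
      rw [single_eq_smul, map_smul, h, smul_smul]
    rwa [heq] at h2
  have key : ∀ s : Finset (ℤ × ℕ), ‖∑ x ∈ s, (v x * c x) • e (f x)‖ ≤ C * ‖v‖ := by
    intro s
    have hON : Orthonormal ℂ fun x => e (f x) := orthonormal_e.comp f hf
    have hinner := hON.inner_sum (fun x => v x * c x) (fun x => v x * c x) s
    have h1' : ‖∑ x ∈ s, (v x * c x) • e (f x)‖ ^ 2 = ∑ x ∈ s, ‖v x * c x‖ ^ 2 := by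
      have hinner2 : (⟪∑ x ∈ s, (v x * c x) • e (f x), ∑ x ∈ s, (v x * c x) • e (f x)⟫)
          = ((∑ x ∈ s, ‖v x * c x‖ ^ 2 : ℝ) : ℂ) := by
        rw [hinner]
        push_cast
        exact Finset.sum_congr rfl fun x _ => RCLike.conj_mul _
      rw [← inner_self_eq_norm_sq (𝕜 := ℂ), hinner2]
      simp [← Complex.ofReal_mul, ← Complex.ofReal_pow, Complex.ofReal_re]
    have h2 : ∑ x ∈ s, ‖v x‖ ^ 2 ≤ ‖v‖ ^ 2 := by
      have h2' := lp.sum_rpow_le_norm_rpow (p := 2) (by norm_num) v s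
      rw [show (2:ENNReal).toReal = ((2:ℕ):ℝ) by norm_num] at h2'
      simpa [Real.rpow_natCast] using h2'
    have h3 : ∑ x ∈ s, ‖v x * c x‖ ^ 2 ≤ C ^ 2 * ‖v‖ ^ 2 := by
      have hstep : ∑ x ∈ s, ‖v x * c x‖ ^ 2 ≤ ∑ x ∈ s, C ^ 2 * ‖v x‖ ^ 2 := by
        refine Finset.sum_le_sum fun x _ => ?_
        rw [norm_mul, mul_pow]
        have h4 : ‖c x‖ ^ 2 ≤ C ^ 2 := by nlinarith [norm_nonneg (c x), hc x]
        nlinarith [mul_le_mul_of_nonneg_left h4 (sq_nonneg ‖v x‖)]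
      rw [← Finset.mul_sum] at hstep
      nlinarith [sq_nonneg C]
    nlinarith [norm_nonneg (∑ x ∈ s, (v x * c x) • e (f x)), norm_nonneg v,
      mul_nonneg hC (norm_nonneg v)]
  have ht : Filter.Tendsto (fun s : Finset (ℤ × ℕ) => ∑ x ∈ s, (v x * c x) • e (f x))
      Filter.atTop (nhds (T v)) := hTv
  exact le_of_tendsto' ht.norm key

lemma pow_apply_eigen (T : H2 →L[ℂ] H2) (v : H2) (μ : ℂ) (h : T v = μ • v) (n : ℕ) :
    (T ^ n) v = μ ^ n • v := by
  induction n with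
  | zero => simp
  | succ n ih =>
      rw [pow_succ, ContinuousLinearMap.mul_apply, h, map_smul, ih, smul_smul, pow_succ]
      ring_nf

lemma aeval_apply_eigen (T : H2 →L[ℂ] H2) (v : H2) (μ : ℂ) (h : T v = μ • v) (P : Polynomial ℂ) :
    (Polynomial.aeval T P) v = P.eval μ • v := by
  induction P using Polynomial.induction_on' with
  | add p r hp hr =>
      rw [map_add, ContinuousLinearMap.add_apply, hp, hr, Polynomial.eval_add, add_smul]
  | monomial n a =>
      rw [Polynomial.aeval_monomial, ContinuousLinearMap.mul_apply,
        pow_apply_eigen T v μ h n, map_smul, Polynomial.eval_monomial]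
      simp [Algebra.algebraMap_eq_smul_one, smul_smul, mul_comm]

lemma star_apply_eq {T : H2 →L[ℂ] H2} {c : ℤ × ℕ → ℂ} {f : ℤ × ℕ → ℤ × ℕ}
    (hf : Function.Injective f) (h : ∀ x, T (e x) = c x • e (f x)) (x : ℤ × ℕ) :
    (star T) (e (f x)) = (starRingEnd ℂ) (c x) • e x := by
  apply vec_ext
  intro z
  rw [ContinuousLinearMap.star_eq_adjoint, ContinuousLinearMap.adjoint_inner_right,
    h z, inner_smul_left, inner_smul_right, inner_e_e, inner_e_e]
  by_cases hz : z = x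
  · subst hz; simp
  · rw [if_neg (fun hfz => hz (hf hfz)), if_neg hz, mul_zero, mul_zero]

lemma star_apply_eq_zero {T : H2 →L[ℂ] H2} {c : ℤ × ℕ → ℂ} {f : ℤ × ℕ → ℤ × ℕ}
    (h : ∀ x, T (e x) = c x • e (f x)) (y : ℤ × ℕ) (hy : ∀ x, f x ≠ y) :
    (star T) (e y) = 0 := by
  apply vec_ext
  intro z
  rw [ContinuousLinearMap.star_eq_adjoint, ContinuousLinearMap.adjoint_inner_right,
    h z, inner_smul_left, inner_e_e, if_neg (hy z), mul_zero, inner_zero_right]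
/-- The defining property of the operator `X₀(q) = t ⊗ q^N` (with the convention `0⁰ = 1`). -/
def IsX₀ (q : ℝ) (T : H2 →L[ℂ] H2) : Prop :=
  ∀ (m : ℤ) (i : ℕ), T (e (m, i)) = ((q ^ i : ℝ) : ℂ) • e (m + 1, i)

/-- The defining property of the operator `X₁(q) = t ⊗ √(1-q^{2N+2})S*`. -/
def IsX₁ (q : ℝ) (T : H2 →L[ℂ] H2) : Prop :=
  ∀ (m : ℤ) (i : ℕ), T (e (m, i)) = ((Real.sqrt (1 - q ^ (2 * i + 2)) : ℝ) : ℂ) • e (m + 1, i + 1)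

/-- The unital C*-subalgebra `D₂⁴` of `B(H₂)` generated by the two operators. -/
noncomputable def D24 (X₀ X₁ : H2 →L[ℂ] H2) : StarSubalgebra ℂ (H2 →L[ℂ] H2) :=
  (StarAlgebra.adjoin ℂ {X₀, X₁}).topologicalClosure

lemma fshift_inj : Function.Injective (fun x : ℤ × ℕ => (x.1 + 1, x.2)) := by
  rintro ⟨a, b⟩ ⟨a', b'⟩ h
  simp only [Prod.mk.injEq] at h ⊢
  omega

lemma fshift2_inj : Function.Injective (fun x : ℤ × ℕ => (x.1 + 1, x.2 + 1)) := by
  rintro ⟨a, b⟩ ⟨a', b'⟩ h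
  simp only [Prod.mk.injEq] at h ⊢
  omega

lemma e_congr {a b : ℤ} {c d : ℕ} (h1 : a = b) (h2 : c = d) : e (a, c) = e (b, d) := by
  rw [h1, h2]

lemma isX0_apply' {q : ℝ} {T : H2 →L[ℂ] H2} (h : IsX₀ q T) (x : ℤ × ℕ) :
    T (e x) = ((q ^ x.2 : ℝ) : ℂ) • e (x.1 + 1, x.2) := h x.1 x.2

lemma star_isX0 {q : ℝ} {T : H2 →L[ℂ] H2} (h : IsX₀ q T) (m : ℤ) (i : ℕ) :
    (star T) (e (m, i)) = ((q ^ i : ℝ) : ℂ) • e (m - 1, i) := by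
  have h2 := star_apply_eq (f := fun x : ℤ × ℕ => (x.1 + 1, x.2)) fshift_inj
    (fun x => isX0_apply' h x) (m - 1, i)
  simpa [show m - 1 + 1 = m from by ring, Complex.conj_ofReal] using h2

lemma isX1_zero_apply {T : H2 →L[ℂ] H2} (h : IsX₁ 0 T) (x : ℤ × ℕ) :
    T (e x) = (1 : ℂ) • e (x.1 + 1, x.2 + 1) := by
  obtain ⟨m, i⟩ := x
  have h2 := h m i
  rw [zero_pow (by omega : 2 * i + 2 ≠ 0), sub_zero, Real.sqrt_one] at h2
  simpa using h2

lemma star_isX1_zero_succ {T : H2 →L[ℂ] H2} (h : IsX₁ 0 T) (m : ℤ) (i : ℕ) :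
    (star T) (e (m, i + 1)) = e (m - 1, i) := by
  have h2 := star_apply_eq (f := fun x : ℤ × ℕ => (x.1 + 1, x.2 + 1)) fshift2_inj
    (isX1_zero_apply h) (m - 1, i)
  simpa [show m - 1 + 1 = m from by ring] using h2

lemma star_isX1_zero_zero {T : H2 →L[ℂ] H2} (h : IsX₁ 0 T) (m : ℤ) :
    (star T) (e (m, 0)) = 0 :=
  star_apply_eq_zero (isX1_zero_apply h) (m, 0) (fun x => by simp [Prod.ext_iff])

lemma isX1_pow {T : H2 →L[ℂ] H2} (h : IsX₁ 0 T) :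
    ∀ (n : ℕ) (m : ℤ) (i : ℕ), (T ^ n) (e (m, i)) = e (m + n, i + n)
  | 0, m, i => by simp
  | (n + 1), m, i => by
      rw [pow_succ, ContinuousLinearMap.mul_apply, isX1_zero_apply h (m, i), one_smul]
      rw [isX1_pow h n (m + 1) (i + 1)]
      exact e_congr (by push_cast; ring) (by omega)

lemma star_isX1_pow_add {T : H2 →L[ℂ] H2} (h : IsX₁ 0 T) :
    ∀ (n : ℕ) (m : ℤ) (k : ℕ), ((star T) ^ n) (e (m, k + n)) = e (m - n, k)
  | 0, m, k => by simp
  | (n + 1), m, k => by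
      rw [pow_succ, ContinuousLinearMap.mul_apply]
      have h1 : (star T) (e (m, k + (n + 1))) = e (m - 1, k + n) := by
        rw [show k + (n + 1) = (k + n) + 1 from by omega]
        exact star_isX1_zero_succ h m (k + n)
      rw [h1, star_isX1_pow_add h n (m - 1) k]
      exact e_congr (by push_cast; ring) rfl

lemma star_isX1_pow_lt {T : H2 →L[ℂ] H2} (h : IsX₁ 0 T) :
    ∀ (n : ℕ) (m : ℤ) (k : ℕ), k < n → ((star T) ^ n) (e (m, k)) = 0
  | 0, _, _, hk => absurd hk (by omega)
  | (n + 1), m, k, hk => by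
      rw [pow_succ, ContinuousLinearMap.mul_apply]
      match k, hk with
      | 0, _ => rw [star_isX1_zero_zero h m]; simp
      | (j + 1), hk =>
          rw [star_isX1_zero_succ h m j, star_isX1_pow_lt h n (m - 1) j (by omega)]

lemma mem_closure_of_forall {S : StarSubalgebra ℂ (H2 →L[ℂ] H2)} {T : H2 →L[ℂ] H2}
    (h : ∀ ε : ℝ, 0 < ε → ∃ A ∈ S, ‖T - A‖ < ε) : T ∈ S.topologicalClosure := by
  rw [← SetLike.mem_coe, StarSubalgebra.topologicalClosure_coe, Metric.mem_closure_iff]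
  intro ε hε
  obtain ⟨A, hA, hlt⟩ := h ε hε
  exact ⟨A, hA, by rwa [dist_eq_norm]⟩

set_option maxHeartbeats 1000000 in
/-- For every `q ∈ (0,1)`, the C*-algebras `D₂⁴(q)` and `D₂⁴(0)` coincide. -/
theorem stmt_1 (q : ℝ) (hq : q ∈ Set.Ioo (0 : ℝ) 1)
    (X₀q X₁q X₀0 X₁0 : H2 →L[ℂ] H2)
    (h0q : IsX₀ q X₀q) (h1q : IsX₁ q X₁q)
    (h00 : IsX₀ 0 X₀0) (h10 : IsX₁ 0 X₁0) :
    D24 X₀q X₁q = D24 X₀0 X₁0 := by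
  obtain ⟨hq0, hq1⟩ := hq
  have hq0' : (0 : ℝ) ≤ q := hq0.le
  have hq1' : q ≤ 1 := hq1.le
  set Aq : StarSubalgebra ℂ (H2 →L[ℂ] H2) := StarAlgebra.adjoin ℂ {X₀q, X₁q} with hAqdef
  set A0 : StarSubalgebra ℂ (H2 →L[ℂ] H2) := StarAlgebra.adjoin ℂ {X₀0, X₁0} with hA0def
  have mX0q : X₀q ∈ Aq := StarAlgebra.subset_adjoin ℂ _ (Set.mem_insert _ _)
  have mX1q : X₁q ∈ Aq := StarAlgebra.subset_adjoin ℂ _ (Set.mem_insert_of_mem _ rfl)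
  have mX00 : X₀0 ∈ A0 := StarAlgebra.subset_adjoin ℂ _ (Set.mem_insert _ _)
  have mX10 : X₁0 ∈ A0 := StarAlgebra.subset_adjoin ℂ _ (Set.mem_insert_of_mem _ rfl)
  -- the diagonal operator `Dq`
  set Dq : H2 →L[ℂ] H2 := star X₀q * X₀q with hDqdef
  have mDq : Dq ∈ Aq := mul_mem (star_mem mX0q) mX0q
  have hDq : ∀ (m : ℤ) (i : ℕ), Dq (e (m, i)) = (((q ^ 2) ^ i : ℝ) : ℂ) • e (m, i) := by
    intro m i
    rw [hDqdef, ContinuousLinearMap.mul_apply, h0q m i, map_smul, star_isX0 h0q (m + 1) i,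
      smul_smul, show (m + 1 - 1 : ℤ) = m from by ring]
    congr 1
    push_cast
    ring
  have hDqpow : ∀ (n : ℕ) (m : ℤ) (i : ℕ),
      (Dq ^ n) (e (m, i)) = ((((q ^ 2) ^ i) ^ n : ℝ) : ℂ) • e (m, i) := by
    intro n m i
    rw [pow_apply_eigen Dq (e (m, i)) _ (hDq m i) n]
    congr 1
    push_cast
    ring
  -- Claim 1 : X₀0 ∈ D24(q)
  have claimX00 : X₀0 ∈ D24 X₀q X₁q := by
    apply mem_closure_of_forall
    intro ε hε
    obtain ⟨n, hn⟩ := exists_pow_lt_of_lt_one hε hq1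
    refine ⟨X₀q * Dq ^ n, mul_mem mX0q (pow_mem mDq n), ?_⟩
    have hact : ∀ x : ℤ × ℕ, (X₀0 - X₀q * Dq ^ n) (e x)
        = (if x.2 = 0 then 0 else -((q ^ x.2 * ((q ^ 2) ^ x.2) ^ n : ℝ) : ℂ)) • e (x.1 + 1, x.2) := by
      rintro ⟨m, i⟩
      rw [ContinuousLinearMap.sub_apply, ContinuousLinearMap.mul_apply, hDqpow n m i,
        map_smul, h0q m i, h00 m i, smul_smul, ← sub_smul]
      congr 1
      rcases Nat.eq_zero_or_pos i with hi | hi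
      · subst hi; norm_num
      · rw [if_neg (by omega), zero_pow (by omega)]
        push_cast
        ring
    have hb : ‖X₀0 - X₀q * Dq ^ n‖ ≤ q ^ n := by
      refine opNorm_le_of_shift fshift_inj hact (pow_nonneg hq0' n) ?_
      rintro ⟨m, i⟩
      rcases Nat.eq_zero_or_pos i with hi | hi
      · subst hi
        rw [if_pos rfl, norm_zero]
        exact pow_nonneg hq0' n
      · rw [if_neg (by omega), norm_neg, Complex.norm_real, Real.norm_eq_abs,
          abs_of_nonneg (by positivity)]
        have hrw : q ^ i * ((q ^ 2) ^ i) ^ n = q ^ (i + 2 * i * n) := by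
          rw [pow_add, ← pow_mul, ← pow_mul]
          ring
        rw [hrw]
        refine pow_le_pow_of_le_one hq0' hq1' ?_
        have h2 : n ≤ 2 * i * n := Nat.le_mul_of_pos_left n (by omega)
        exact le_trans h2 (Nat.le_add_left _ _)
    exact lt_of_le_of_lt hb hn
  -- Claim 2 : X₁0 ∈ D24(q)
  have hq2lt : q ^ 2 < 1 := by nlinarith
  have claimX10 : X₁0 ∈ D24 X₀q X₁q := by
    apply mem_closure_of_forall
    intro ε hε
    set g : ℝ → ℝ := fun x => (Real.sqrt (1 - q ^ 2 * x))⁻¹ with hgdef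
    have hgc : ContinuousOn g (Set.Icc 0 1) := by
      apply ContinuousOn.inv₀
      · exact (Real.continuous_sqrt.comp (continuous_const.sub (continuous_const.mul continuous_id))).continuousOn
      · intro x hx
        have : 0 < 1 - q ^ 2 * x := by nlinarith [hx.1, hx.2, sq_nonneg q]
        exact ne_of_gt (Real.sqrt_pos.2 this)
    obtain ⟨p, hp⟩ := exists_polynomial_near_of_continuousOn 0 1 g hgc (ε / 2) (by linarith)
    set A : H2 →L[ℂ] H2 := X₁q * Polynomial.aeval Dq (p.map (algebraMap ℝ ℂ)) with hAdef
    have mA : A ∈ Aq := by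
      refine mul_mem mX1q ?_
      have h1 : Polynomial.aeval Dq (p.map (algebraMap ℝ ℂ))
          ∈ Algebra.adjoin ℂ ({Dq} : Set (H2 →L[ℂ] H2)) :=
        Polynomial.aeval_mem_adjoin_singleton _ _
      have h2 : Algebra.adjoin ℂ ({Dq} : Set (H2 →L[ℂ] H2)) ≤ Aq.toSubalgebra :=
        Algebra.adjoin_le (by simpa using mDq)
      exact h2 h1
    refine ⟨A, mA, ?_⟩
    have hevalmap : ∀ r : ℝ, (p.map (algebraMap ℝ ℂ)).eval ((r : ℝ) : ℂ) = ((p.eval r : ℝ) : ℂ) := by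
      intro r
      rw [Polynomial.eval_map, show ((r : ℝ) : ℂ) = algebraMap ℝ ℂ r from rfl,
        Polynomial.eval₂_at_apply]
      rfl
    have hact : ∀ x : ℤ × ℕ, (X₁0 - A) (e x)
        = ((1 - p.eval ((q ^ 2) ^ x.2) * Real.sqrt (1 - q ^ (2 * x.2 + 2)) : ℝ) : ℂ)
          • e (x.1 + 1, x.2 + 1) := by
      rintro ⟨m, i⟩
      rw [ContinuousLinearMap.sub_apply, hAdef, ContinuousLinearMap.mul_apply,
        aeval_apply_eigen Dq (e (m, i)) _ (hDq m i), hevalmap, map_smul, h1q m i,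
        isX1_zero_apply h10 (m, i), smul_smul, ← sub_smul]
      congr 1
      push_cast
      ring
    have hb : ‖X₁0 - A‖ ≤ ε / 2 := by
      refine opNorm_le_of_shift fshift2_inj hact (by linarith) ?_
      rintro ⟨m, i⟩
      have ht0 : (0 : ℝ) ≤ (q ^ 2) ^ i := by positivity
      have ht1 : ((q ^ 2) ^ i : ℝ) ≤ 1 := pow_le_one₀ (by positivity) hq2lt.le
      have hsq : q ^ (2 * i + 2) = q ^ 2 * (q ^ 2) ^ i := by
        rw [pow_add, pow_mul]; ring
      have hspos : 0 < Real.sqrt (1 - q ^ (2 * i + 2)) := by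
        rw [hsq]; exact Real.sqrt_pos.2 (by nlinarith [sq_nonneg q])
      have hsle : Real.sqrt (1 - q ^ (2 * i + 2)) ≤ 1 := by
        have h := Real.sqrt_le_sqrt (show (1 : ℝ) - q ^ (2 * i + 2) ≤ 1 by
          nlinarith [pow_nonneg hq0' (2 * i + 2)])
        rwa [Real.sqrt_one] at h
      have hid : Real.sqrt (1 - q ^ (2 * i + 2)) * g ((q ^ 2) ^ i) = 1 := by
        rw [hgdef]
        simp only
        rw [← hsq]
        exact mul_inv_cancel₀ hspos.ne'
      have happrox := hp ((q ^ 2) ^ i) ⟨ht0, ht1⟩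
      calc ‖((1 - p.eval ((q ^ 2) ^ i) * Real.sqrt (1 - q ^ (2 * i + 2)) : ℝ) : ℂ)‖
          = |1 - p.eval ((q ^ 2) ^ i) * Real.sqrt (1 - q ^ (2 * i + 2))| := by
            rw [Complex.norm_real, Real.norm_eq_abs]
        _ = Real.sqrt (1 - q ^ (2 * i + 2)) * |g ((q ^ 2) ^ i) - p.eval ((q ^ 2) ^ i)| := by
            have hrw : 1 - p.eval ((q ^ 2) ^ i) * Real.sqrt (1 - q ^ (2 * i + 2))
                = Real.sqrt (1 - q ^ (2 * i + 2)) * (g ((q ^ 2) ^ i) - p.eval ((q ^ 2) ^ i)) := by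
              rw [mul_sub, hid]; ring
            rw [hrw, abs_mul, abs_of_pos hspos]
        _ ≤ 1 * (ε / 2) := by
            refine mul_le_mul hsle ?_ (abs_nonneg _) zero_le_one
            rw [abs_sub_comm]
            exact (hp ((q ^ 2) ^ i) ⟨ht0, ht1⟩).le
        _ = ε / 2 := one_mul _
    linarith
  -- Claim 3 : X₀q ∈ D24(0)
  have htermA : ∀ (i : ℕ) (m : ℤ) (j : ℕ),
      (X₁0 ^ i * X₀0 * (star X₁0) ^ i) (e (m, j)) = if j = i then e (m + 1, j) else 0 := by
    intro i m j
    rw [ContinuousLinearMap.mul_apply, ContinuousLinearMap.mul_apply]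
    rcases le_or_gt i j with hij | hij
    · obtain ⟨k, rfl⟩ : ∃ k, j = k + i := ⟨j - i, by omega⟩
      rw [star_isX1_pow_add h10 i m k, h00 (m - i) k, map_smul, isX1_pow h10 i (m - i + 1) k]
      rcases Nat.eq_zero_or_pos k with hk | hk
      · subst hk
        rw [if_pos (by omega)]
        simp only [pow_zero, Complex.ofReal_one, one_smul]
        exact e_congr (by push_cast; ring) (by omega)
      · rw [if_neg (by omega), zero_pow (by omega)]
        simp only [Complex.ofReal_zero, zero_smul]
    · rw [star_isX1_pow_lt h10 i m j hij, if_neg (by omega)]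
      simp only [map_zero]
  have claimX0q : X₀q ∈ D24 X₀0 X₁0 := by
    apply mem_closure_of_forall
    intro ε hε
    obtain ⟨n, hn⟩ := exists_pow_lt_of_lt_one hε hq1
    set A : H2 →L[ℂ] H2
      := ∑ i ∈ Finset.range (n + 1), ((q ^ i : ℝ) : ℂ) • (X₁0 ^ i * X₀0 * (star X₁0) ^ i)
      with hAdef
    have mA : A ∈ A0 := by
      refine sum_mem fun i _ => ?_
      exact SMulMemClass.smul_mem _
        (mul_mem (mul_mem (pow_mem mX10 i) mX00) (pow_mem (star_mem mX10) i))
    refine ⟨A, mA, ?_⟩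
    have hAact : ∀ (m : ℤ) (j : ℕ),
        A (e (m, j)) = (if j ≤ n then ((q ^ j : ℝ) : ℂ) else 0) • e (m + 1, j) := by
      intro m j
      rw [hAdef, ContinuousLinearMap.sum_apply]
      have hterms : ∀ i ∈ Finset.range (n + 1),
          (((q ^ i : ℝ) : ℂ) • (X₁0 ^ i * X₀0 * (star X₁0) ^ i)) (e (m, j))
          = if j = i then ((q ^ j : ℝ) : ℂ) • e (m + 1, j) else 0 := by
        intro i _
        rw [ContinuousLinearMap.smul_apply, htermA i m j]
        by_cases hji : j = i
        · subst hji
          rw [if_pos rfl, if_pos rfl]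
        · rw [if_neg hji, if_neg (fun h => hji h), smul_zero]
      rw [Finset.sum_congr rfl hterms,
        Finset.sum_ite_eq (Finset.range (n + 1)) j (fun _ => ((q ^ j : ℝ) : ℂ) • e (m + 1, j))]
      by_cases hj : j ≤ n
      · rw [if_pos (Finset.mem_range.2 (by omega)), if_pos hj]
      · rw [if_neg (fun hmem => hj (Nat.lt_succ_iff.1 (Finset.mem_range.1 hmem))), if_neg hj, zero_smul]
    have hact : ∀ x : ℤ × ℕ, (X₀q - A) (e x)
        = (if x.2 ≤ n then 0 else ((q ^ x.2 : ℝ) : ℂ)) • e (x.1 + 1, x.2) := by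
      rintro ⟨m, j⟩
      rw [ContinuousLinearMap.sub_apply, h0q m j, hAact m j, ← sub_smul]
      congr 1
      by_cases hj : j ≤ n
      · rw [if_pos hj, if_pos hj, sub_self]
      · rw [if_neg hj, if_neg hj, sub_zero]
    have hb : ‖X₀q - A‖ ≤ q ^ n := by
      refine opNorm_le_of_shift fshift_inj hact (pow_nonneg hq0' n) ?_
      rintro ⟨m, j⟩
      by_cases hj : j ≤ n
      · rw [if_pos hj, norm_zero]
        exact pow_nonneg hq0' n
      · rw [if_neg hj, Complex.norm_real, Real.norm_eq_abs, abs_of_nonneg (pow_nonneg hq0' j)]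
        exact pow_le_pow_of_le_one hq0' hq1' (by omega)
    exact lt_of_le_of_lt hb hn
  -- Claim 4 : X₁q ∈ D24(0)
  have htermB : ∀ (i : ℕ) (m : ℤ) (j : ℕ),
      (X₁0 ^ (i + 1) * (X₀0 * star X₀0) * (star X₁0) ^ i) (e (m, j))
      = if j = i then e (m + 1, j + 1) else 0 := by
    intro i m j
    rw [ContinuousLinearMap.mul_apply, ContinuousLinearMap.mul_apply]
    rcases le_or_gt i j with hij | hij
    · obtain ⟨k, rfl⟩ : ∃ k, j = k + i := ⟨j - i, by omega⟩
      rw [star_isX1_pow_add h10 i m k, ContinuousLinearMap.mul_apply,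
        star_isX0 h00 (m - i) k, map_smul, h00 (m - i - 1) k, smul_smul, map_smul,
        isX1_pow h10 (i + 1) (m - i - 1 + 1) k]
      rcases Nat.eq_zero_or_pos k with hk | hk
      · subst hk
        rw [if_pos (by omega)]
        simp only [pow_zero, Complex.ofReal_one, one_mul, one_smul]
        exact e_congr (by push_cast; ring) (by omega)
      · rw [if_neg (by omega), zero_pow (by omega)]
        simp only [Complex.ofReal_zero, zero_mul, mul_zero, zero_smul]
    · rw [star_isX1_pow_lt h10 i m j hij, if_neg (by omega), map_zero, map_zero]
  have claimX1q : X₁q ∈ D24 X₀0 X₁0 := by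
    apply mem_closure_of_forall
    intro ε hε
    obtain ⟨n, hn⟩ := exists_pow_lt_of_lt_one hε hq1
    set A : H2 →L[ℂ] H2 := X₁0 + ∑ i ∈ Finset.range (n + 1),
        ((Real.sqrt (1 - q ^ (2 * i + 2)) - 1 : ℝ) : ℂ)
          • (X₁0 ^ (i + 1) * (X₀0 * star X₀0) * (star X₁0) ^ i) with hAdef
    have mA : A ∈ A0 := by
      refine add_mem mX10 (sum_mem fun i _ => ?_)
      exact SMulMemClass.smul_mem _
        (mul_mem (mul_mem (pow_mem mX10 (i + 1)) (mul_mem mX00 (star_mem mX00)))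
          (pow_mem (star_mem mX10) i))
    refine ⟨A, mA, ?_⟩
    have hAact : ∀ (m : ℤ) (j : ℕ), A (e (m, j))
        = (if j ≤ n then ((Real.sqrt (1 - q ^ (2 * j + 2)) : ℝ) : ℂ) else 1) • e (m + 1, j + 1) := by
      intro m j
      rw [hAdef, ContinuousLinearMap.add_apply, ContinuousLinearMap.sum_apply,
        isX1_zero_apply h10 (m, j)]
      have hterms : ∀ i ∈ Finset.range (n + 1),
          (((Real.sqrt (1 - q ^ (2 * i + 2)) - 1 : ℝ) : ℂ)
            • (X₁0 ^ (i + 1) * (X₀0 * star X₀0) * (star X₁0) ^ i)) (e (m, j))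
          = if j = i then ((Real.sqrt (1 - q ^ (2 * j + 2)) - 1 : ℝ) : ℂ) • e (m + 1, j + 1)
            else 0 := by
        intro i _
        rw [ContinuousLinearMap.smul_apply, htermB i m j]
        by_cases hji : j = i
        · subst hji
          rw [if_pos rfl, if_pos rfl]
        · rw [if_neg hji, if_neg (fun h => hji h), smul_zero]
      rw [Finset.sum_congr rfl hterms,
        Finset.sum_ite_eq (Finset.range (n + 1)) j
          (fun _ => ((Real.sqrt (1 - q ^ (2 * j + 2)) - 1 : ℝ) : ℂ) • e (m + 1, j + 1))]
      by_cases hj : j ≤ n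
      · rw [if_pos (Finset.mem_range.2 (by omega)), if_pos hj, ← add_smul]
        congr 1
        push_cast
        ring
      · rw [if_neg (fun hmem => hj (Nat.lt_succ_iff.1 (Finset.mem_range.1 hmem))), if_neg hj, add_zero]
    have hact : ∀ x : ℤ × ℕ, (X₁q - A) (e x)
        = (if x.2 ≤ n then 0 else ((Real.sqrt (1 - q ^ (2 * x.2 + 2)) - 1 : ℝ) : ℂ))
          • e (x.1 + 1, x.2 + 1) := by
      rintro ⟨m, j⟩
      rw [ContinuousLinearMap.sub_apply, h1q m j, hAact m j, ← sub_smul]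
      congr 1
      by_cases hj : j ≤ n
      · rw [if_pos hj, if_pos hj, sub_self]
      · rw [if_neg hj, if_neg hj]
        push_cast
        ring
    have hb : ‖X₁q - A‖ ≤ q ^ n := by
      refine opNorm_le_of_shift fshift2_inj hact (pow_nonneg hq0' n) ?_
      rintro ⟨m, j⟩
      by_cases hj : j ≤ n
      · rw [if_pos hj, norm_zero]
        exact pow_nonneg hq0' n
      · rw [if_neg hj, Complex.norm_real, Real.norm_eq_abs]
        have h0t : 0 ≤ q ^ (2 * j + 2) := pow_nonneg hq0' _
        have h1t : q ^ (2 * j + 2) ≤ 1 := pow_le_one₀ hq0' hq1'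
        have hple : q ^ (2 * j + 2) ≤ q ^ n := pow_le_pow_of_le_one hq0' hq1' (by omega)
        have hs0 : 0 ≤ Real.sqrt (1 - q ^ (2 * j + 2)) := Real.sqrt_nonneg _
        have hs1 : Real.sqrt (1 - q ^ (2 * j + 2)) ≤ 1 := by
          have h := Real.sqrt_le_sqrt (show (1 : ℝ) - q ^ (2 * j + 2) ≤ 1 by linarith)
          rwa [Real.sqrt_one] at h
        have hssq : Real.sqrt (1 - q ^ (2 * j + 2)) ^ 2 = 1 - q ^ (2 * j + 2) :=
          Real.sq_sqrt (by linarith)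
        rw [abs_sub_comm, abs_of_nonneg (by linarith)]
        nlinarith
    exact lt_of_le_of_lt hb hn
  -- conclusion
  refine le_antisymm ?_ ?_
  · refine StarSubalgebra.topologicalClosure_minimal ?_
      (StarSubalgebra.isClosed_topologicalClosure _)
    refine StarAlgebra.adjoin_le ?_
    rintro T hT
    rcases Set.mem_insert_iff.1 hT with rfl | hT'
    · exact claimX0q
    · rw [Set.mem_singleton_iff] at hT'
      subst hT'
      exact claimX1q
  · refine StarSubalgebra.topologicalClosure_minimal ?_
      (StarSubalgebra.isClosed_topologicalClosure _)
    refine StarAlgebra.adjoin_le ?_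
    rintro T hT
    rcases Set.mem_insert_iff.1 hT with rfl | hT'
    · exact claimX00
    · rw [Set.mem_singleton_iff] at hT'
      subst hT'
      exact claimX10
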